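/- arXiv:1806.04819 — 6 statements merged into one kernel-verified Lean document; each statement's English description precedes it below -/
import Mathlib

section
/- Let ε > 0, T ≥ 1, and set θ_t(ε) = (ε/(ε + 4·log 2))^t for t = 1,…,T. Let Q_0 be a probability measure on X, let c_1,…,c_T : X → ℝ be measurable with c_t(x) ∈ [-log 2, log 2] for all x, and define φ(θ(ε)) = log ∫_X exp(∑_{t=1}^T θ_t(ε)·c_t(x)) dQ_0(x). Then for every x ∈ X, -ε/2 ≤ ∑_{t=1}^T θ_t(ε)·c_t(x) - φ(θ(ε)) ≤ ε/2. -/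
/-!
Write `r = ε / (ε + 4 log 2)`, so that `θ_t = r ^ t` and `r / (1 - r) = ε / (4 log 2)`.
Since `|c_t| ≤ log 2`, the exponent `S(x) = ∑ θ_t c_t(x)` is bounded by
`log 2 · ∑_{t ≥ 1} r ^ t = ε / 4` in absolute value. The log-normalizer `φ = log ∫ exp S dQ₀`
of a probability measure then lies between the extreme values of `S`, so also `|φ| ≤ ε / 4`,
and `|S(x) - φ| ≤ ε / 2`.
-/

open MeasureTheory Finset

lemma geom_sum_Icc_one_le {r : ℝ} (hr0 : 0 ≤ r) (hr1 : r < 1) (T : ℕ) :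
    ∑ t ∈ Icc 1 T, r ^ t ≤ r / (1 - r) := by
  simpa [← Ico_add_one_right_eq_Icc] using geom_sum_Ico_le_of_lt_one (m := 1) (n := T + 1) hr0 hr1

lemma div_add_div_one_sub_div_add {a b : ℝ} (hab : a + b ≠ 0) :
    a / (a + b) / (1 - a / (a + b)) = a / b := by
  rw [one_sub_div hab, add_sub_cancel_left, div_div_div_cancel_right₀ hab]

lemma abs_sum_mul_le_of_abs_le {ι : Type*} (s : Finset ι) {w c : ι → ℝ} {L : ℝ}
    (hw : ∀ i ∈ s, 0 ≤ w i) (hc : ∀ i ∈ s, |c i| ≤ L) :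
    |∑ i ∈ s, w i * c i| ≤ (∑ i ∈ s, w i) * L := by
  rw [sum_mul]
  refine (abs_sum_le_sum_abs _ _).trans (sum_le_sum fun i hi => ?_)
  rw [abs_mul, abs_of_nonneg (hw i hi)]
  exact mul_le_mul_of_nonneg_left (hc i hi) (hw i hi)

lemma abs_log_integral_exp_le {X : Type*} [MeasurableSpace X] (μ : Measure X)
    [IsProbabilityMeasure μ] {f : X → ℝ} (hf : AEStronglyMeasurable f μ) {B : ℝ}
    (hB : ∀ᵐ x ∂μ, |f x| ≤ B) :
    |Real.log (∫ x, Real.exp (f x) ∂μ)| ≤ B := by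
  have hint : Integrable (fun x => Real.exp (f x)) μ := by
    refine Integrable.of_bound (Real.continuous_exp.comp_aestronglyMeasurable hf) (Real.exp B) ?_
    filter_upwards [hB] with x hx
    rw [Real.norm_of_nonneg (Real.exp_nonneg _)]
    exact Real.exp_le_exp.2 (abs_le.1 hx).2
  have hlower : Real.exp (-B) ≤ ∫ x, Real.exp (f x) ∂μ := by
    simpa using integral_mono_ae (integrable_const (Real.exp (-B))) hint
      (hB.mono fun x hx => Real.exp_le_exp.2 (abs_le.1 hx).1)
  have hupper : ∫ x, Real.exp (f x) ∂μ ≤ Real.exp B := by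
    simpa using integral_mono_ae hint (integrable_const (Real.exp B))
      (hB.mono fun x hx => Real.exp_le_exp.2 (abs_le.1 hx).2)
  have hpos : 0 < ∫ x, Real.exp (f x) ∂μ := (Real.exp_pos _).trans_le hlower
  exact abs_le.2 ⟨(Real.le_log_iff_exp_le hpos).2 hlower, (Real.log_le_iff_le_exp hpos).2 hupper⟩

theorem mbde_exponent_bounded_general
    {X : Type*} [MeasurableSpace X]
    (ε : ℝ) (hε : 0 < ε) (T : ℕ)
    (Q0 : Measure X) [IsProbabilityMeasure Q0]
    (c : ℕ → X → ℝ) (hc : ∀ t, Measurable (c t))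
    (hcb : ∀ t x, c t x ∈ Set.Icc (-Real.log 2) (Real.log 2))
    (θ : ℕ → ℝ) (hθ : ∀ t, θ t = (ε / (ε + 4 * Real.log 2)) ^ t)
    (φ : ℝ)
    (hφ : φ = Real.log (∫ x, Real.exp (∑ t ∈ Finset.Icc 1 T, θ t * c t x) ∂Q0)) :
    ∀ x : X,
      -(ε / 2) ≤ (∑ t ∈ Finset.Icc 1 T, θ t * c t x) - φ ∧
      (∑ t ∈ Finset.Icc 1 T, θ t * c t x) - φ ≤ ε / 2 := by
  have hlog2 : 0 < Real.log 2 := Real.log_pos one_lt_two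
  set r := ε / (ε + 4 * Real.log 2)
  have hr0 : 0 ≤ r := by positivity
  have hr1 : r < 1 := (div_lt_one (by positivity)).2 (by linarith)
  have hS : ∀ x, |∑ t ∈ Icc 1 T, θ t * c t x| ≤ ε / 4 := fun x => calc
    _ ≤ (∑ t ∈ Icc 1 T, θ t) * Real.log 2 :=
      abs_sum_mul_le_of_abs_le _ (fun t _ => hθ t ▸ pow_nonneg hr0 t)
        (fun t _ => abs_le.2 (hcb t x))
    _ ≤ r / (1 - r) * Real.log 2 := by
      simp_rw [hθ]
      gcongr
      exact geom_sum_Icc_one_le hr0 hr1 T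
    _ = ε / 4 := by
      rw [div_add_div_one_sub_div_add (by positivity)]
      field_simp
  have hφ_abs : |φ| ≤ ε / 4 := hφ ▸ abs_log_integral_exp_le Q0
    (Finset.measurable_sum _ fun t _ => (hc t).const_mul (θ t)).aestronglyMeasurable
    (ae_of_all _ hS)
  intro x
  exact abs_le.1 <| (abs_sub _ φ).trans (by linarith [hS x])

/-- With the MBDE step sizes `θ_t(ε) = (ε/(ε + 4 log 2))^t`, classifiers
`c_t` valued in `[-log 2, log 2]` and log-normalizer `φ`, the exponent
`⟨θ(ε), c(x)⟩ - φ(θ(ε))` lies in `[-ε/2, ε/2]` for every `x`. -/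
theorem mbde_exponent_bounded
    {X : Type*} [MeasurableSpace X]
    (ε : ℝ) (hε : 0 < ε) (T : ℕ) (hT : 1 ≤ T)
    (Q0 : Measure X) [IsProbabilityMeasure Q0]
    (c : ℕ → X → ℝ) (hc : ∀ t, Measurable (c t))
    (hcb : ∀ t x, c t x ∈ Set.Icc (-Real.log 2) (Real.log 2))
    (θ : ℕ → ℝ) (hθ : ∀ t, θ t = (ε / (ε + 4 * Real.log 2)) ^ t)
    (φ : ℝ)
    (hφ : φ = Real.log (∫ x, Real.exp (∑ t ∈ Finset.Icc 1 T, θ t * c t x) ∂Q0)) :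
    ∀ x : X,
      -(ε / 2) ≤ (∑ t ∈ Finset.Icc 1 T, θ t * c t x) - φ ∧
      (∑ t ∈ Finset.Icc 1 T, θ t * c t x) - φ ≤ ε / 2 :=
  mbde_exponent_bounded_general ε hε T Q0 c hc hcb θ hθ φ hφ
end

section
/- Let ε > 0 and let Q_0 be a probability measure on X. Suppose q(x) = exp(∑_{t=1}^T θ_t(ε)·c_t(x) - φ) and q'(x) = exp(∑_{t=1}^{T'} θ_t(ε)·c'_t(x) - φ') are two densities with respect to Q_0, where θ_t(ε) = (ε/(ε + 4·log 2))^t, each c_t and c'_t maps X into [-log 2, log 2], and φ, φ' are the respective log-normalizers (φ = log ∫ exp(∑_t θ_t(ε) c_t) dQ_0, similarly φ'). Then q(x) ∈ [exp(-ε/2), exp(ε/2)] for all x, and consequently q(x) ≤ exp(ε) · q'(x) for all x ∈ X. (The output Q_T of MBDE lies in the ε-mollifier M_ε.) -/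
open MeasureTheory Real

/-!
The step sizes `θ_t = r^t` with `r = ε / (ε + 4 log 2)` form a geometric series with
`∑_{t ≥ 1} r^t = ε / (4 log 2)`, so the exponent `S = ∑_t θ_t c_t` of an MBDE density satisfies
`|S| ≤ ε / 4` pointwise. Averaging `exp S` against the probability measure `Q₀` keeps the
normalizer `φ = log ∫ exp S dQ₀` in `[-ε/4, ε/4]` as well, hence `|S - φ| ≤ ε/2`, i.e. the density
lies in `M_ε`; and any two values in `[exp(-ε/2), exp(ε/2)]` are within a factor `exp ε`.
-/

lemma sum_Icc_one_pow_le_div {r : ℝ} (hr₀ : 0 ≤ r) (hr₁ : r < 1) (T : ℕ) :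
    ∑ t ∈ Finset.Icc 1 T, r ^ t ≤ r / (1 - r) := by
  rw [← Finset.Ico_add_one_right_eq_Icc]
  simpa using geom_sum_Ico_le_of_lt_one (m := 1) (n := T + 1) hr₀ hr₁

lemma abs_sum_Icc_one_pow_mul_le {r B : ℝ} (hr₀ : 0 ≤ r) (hr₁ : r < 1) (T : ℕ) {f : ℕ → ℝ}
    (hf : ∀ t, |f t| ≤ B) :
    |∑ t ∈ Finset.Icc 1 T, r ^ t * f t| ≤ r / (1 - r) * B := by
  have hB : 0 ≤ B := (abs_nonneg _).trans (hf 0)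
  calc |∑ t ∈ Finset.Icc 1 T, r ^ t * f t|
      ≤ ∑ t ∈ Finset.Icc 1 T, r ^ t * B := by
        refine (Finset.abs_sum_le_sum_abs _ _).trans (Finset.sum_le_sum fun t _ => ?_)
        rw [abs_mul, abs_of_nonneg (pow_nonneg hr₀ t)]
        exact mul_le_mul_of_nonneg_left (hf t) (pow_nonneg hr₀ t)
    _ = (∑ t ∈ Finset.Icc 1 T, r ^ t) * B := Finset.sum_mul _ _ _ |>.symm
    _ ≤ r / (1 - r) * B := mul_le_mul_of_nonneg_right (sum_Icc_one_pow_le_div hr₀ hr₁ T) hB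

lemma abs_sum_mbde_step_mul_le {ε : ℝ} (hε : 0 < ε) (T : ℕ) {f : ℕ → ℝ}
    (hf : ∀ t, |f t| ≤ log 2) :
    |∑ t ∈ Finset.Icc 1 T, (ε / (ε + 4 * log 2)) ^ t * f t| ≤ ε / 4 := by
  have hlog : 0 < log 2 := log_pos one_lt_two
  have hden : 0 < ε + 4 * log 2 := by positivity
  have hr₀ : 0 ≤ ε / (ε + 4 * log 2) := by positivity
  have hr₁ : ε / (ε + 4 * log 2) < 1 := (div_lt_one hden).2 (by linarith)
  have hsum : ε / (ε + 4 * log 2) / (1 - ε / (ε + 4 * log 2)) * log 2 = ε / 4 := by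
    field_simp
    ring
  exact hsum ▸ abs_sum_Icc_one_pow_mul_le hr₀ hr₁ T hf

lemma abs_log_integral_exp_le_s3 {X : Type*} [MeasurableSpace X] {μ : Measure X}
    [IsProbabilityMeasure μ] {S : X → ℝ} {a : ℝ} (hS : AEStronglyMeasurable S μ)
    (hSa : ∀ x, |S x| ≤ a) :
    |log (∫ x, exp (S x) ∂μ)| ≤ a := by
  have hint : Integrable (fun x => exp (S x)) μ :=
    .of_bound (continuous_exp.comp_aestronglyMeasurable hS) (exp a) <| .of_forall fun x => by
      rw [norm_of_nonneg (exp_nonneg _)]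
      exact exp_le_exp.2 (abs_le.1 (hSa x)).2
  have hlower : exp (-a) ≤ ∫ x, exp (S x) ∂μ := by
    calc exp (-a) = ∫ _, exp (-a) ∂μ := by simp
      _ ≤ ∫ x, exp (S x) ∂μ :=
        integral_mono (integrable_const _) hint fun x => exp_le_exp.2 (abs_le.1 (hSa x)).1
  have hupper : ∫ x, exp (S x) ∂μ ≤ exp a := by
    calc ∫ x, exp (S x) ∂μ ≤ ∫ _, exp a ∂μ :=
          integral_mono hint (integrable_const _) fun x => exp_le_exp.2 (abs_le.1 (hSa x)).2
      _ = exp a := by simp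
  have hpos : 0 < ∫ x, exp (S x) ∂μ := (exp_pos _).trans_le hlower
  exact abs_le.2 ⟨(le_log_iff_exp_le hpos).2 hlower, (log_le_iff_le_exp hpos).2 hupper⟩

lemma exp_mem_Icc_of_abs_le {y b : ℝ} (h : |y| ≤ b) : exp y ∈ Set.Icc (exp (-b)) (exp b) :=
  ⟨exp_le_exp.2 (abs_le.1 h).1, exp_le_exp.2 (abs_le.1 h).2⟩

lemma mbde_density_mem_Icc {X : Type*} [MeasurableSpace X] {ε : ℝ} (hε : 0 < ε)
    (μ : Measure X) [IsProbabilityMeasure μ] (T : ℕ) {c : ℕ → X → ℝ}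
    (hc : ∀ t, Measurable (c t)) (hcb : ∀ t x, c t x ∈ Set.Icc (-log 2) (log 2)) (x : X) :
    exp ((∑ t ∈ Finset.Icc 1 T, (ε / (ε + 4 * log 2)) ^ t * c t x) -
        log (∫ y, exp (∑ t ∈ Finset.Icc 1 T, (ε / (ε + 4 * log 2)) ^ t * c t y) ∂μ)) ∈
      Set.Icc (exp (-(ε / 2))) (exp (ε / 2)) := by
  have hS : ∀ y, |∑ t ∈ Finset.Icc 1 T, (ε / (ε + 4 * log 2)) ^ t * c t y| ≤ ε / 4 :=
    fun y => abs_sum_mbde_step_mul_le hε T fun t => abs_le.2 (hcb t y)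
  have hmeas : Measurable fun y => ∑ t ∈ Finset.Icc 1 T, (ε / (ε + 4 * log 2)) ^ t * c t y :=
    Finset.measurable_sum _ fun t _ => (hc t).const_mul _
  refine exp_mem_Icc_of_abs_le ((abs_sub _ _).trans ?_)
  linarith [hS x, abs_log_integral_exp_le_s3 (μ := μ) hmeas.aestronglyMeasurable hS]

lemma le_exp_mul_of_mem_Icc {ε q q' : ℝ} (hq : q ∈ Set.Icc (exp (-(ε / 2))) (exp (ε / 2)))
    (hq' : q' ∈ Set.Icc (exp (-(ε / 2))) (exp (ε / 2))) :
    q ≤ exp ε * q' :=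
  calc q ≤ exp (ε / 2) := hq.2
    _ = exp ε * exp (-(ε / 2)) := by rw [← exp_add]; ring_nf
    _ ≤ exp ε * q' := mul_le_mul_of_nonneg_left hq'.1 (exp_nonneg _)

theorem mbde_output_in_mollifier_general
    {X : Type*} [MeasurableSpace X]
    (ε : ℝ) (hε : 0 < ε)
    (Q0 : Measure X) [IsProbabilityMeasure Q0]
    (T T' : ℕ)
    (c c' : ℕ → X → ℝ)
    (hc : ∀ t, Measurable (c t)) (hc' : ∀ t, Measurable (c' t))
    (hcb : ∀ t x, c t x ∈ Set.Icc (-Real.log 2) (Real.log 2))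
    (hcb' : ∀ t x, c' t x ∈ Set.Icc (-Real.log 2) (Real.log 2))
    (θ : ℕ → ℝ) (hθ : ∀ t, θ t = (ε / (ε + 4 * Real.log 2)) ^ t)
    (φ φ' : ℝ)
    (hφ : φ = Real.log (∫ x, Real.exp (∑ t ∈ Finset.Icc 1 T, θ t * c t x) ∂Q0))
    (hφ' : φ' = Real.log (∫ x, Real.exp (∑ t ∈ Finset.Icc 1 T', θ t * c' t x) ∂Q0))
    (q q' : X → ℝ)
    (hq : ∀ x, q x = Real.exp ((∑ t ∈ Finset.Icc 1 T, θ t * c t x) - φ))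
    (hq' : ∀ x, q' x = Real.exp ((∑ t ∈ Finset.Icc 1 T', θ t * c' t x) - φ')) :
    (∀ x, q x ∈ Set.Icc (Real.exp (-(ε / 2))) (Real.exp (ε / 2))) ∧
    (∀ x, q x ≤ Real.exp ε * q' x) := by
  obtain rfl : θ = fun t => (ε / (ε + 4 * log 2)) ^ t := funext hθ
  subst hφ hφ'
  have hmem : ∀ x, q x ∈ Set.Icc (exp (-(ε / 2))) (exp (ε / 2)) := fun x =>
    hq x ▸ mbde_density_mem_Icc hε Q0 T hc hcb x
  have hmem' : ∀ x, q' x ∈ Set.Icc (exp (-(ε / 2))) (exp (ε / 2)) := fun x =>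
    hq' x ▸ mbde_density_mem_Icc hε Q0 T' hc' hcb' x
  exact ⟨hmem, fun x => le_exp_mul_of_mem_Icc (hmem x) (hmem' x)⟩

/-- The output of MBDE lies in the ε-mollifier `M_ε`: any two densities of the
MBDE exponential-family form (w.r.t. the base probability measure `Q0`) take
values in `[exp(-ε/2), exp(ε/2)]` and consequently satisfy the mollifier
likelihood-ratio bound `q x ≤ exp ε * q' x`. -/
theorem mbde_output_in_mollifier
    {X : Type*} [MeasurableSpace X]
    (ε : ℝ) (hε : 0 < ε)
    (Q0 : Measure X) [IsProbabilityMeasure Q0]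
    (T T' : ℕ) (hT : 1 ≤ T) (hT' : 1 ≤ T')
    (c c' : ℕ → X → ℝ)
    (hc : ∀ t, Measurable (c t)) (hc' : ∀ t, Measurable (c' t))
    (hcb : ∀ t x, c t x ∈ Set.Icc (-Real.log 2) (Real.log 2))
    (hcb' : ∀ t x, c' t x ∈ Set.Icc (-Real.log 2) (Real.log 2))
    (θ : ℕ → ℝ) (hθ : ∀ t, θ t = (ε / (ε + 4 * Real.log 2)) ^ t)
    (φ φ' : ℝ)
    (hφ : φ = Real.log (∫ x, Real.exp (∑ t ∈ Finset.Icc 1 T, θ t * c t x) ∂Q0))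
    (hφ' : φ' = Real.log (∫ x, Real.exp (∑ t ∈ Finset.Icc 1 T', θ t * c' t x) ∂Q0))
    (q q' : X → ℝ)
    (hq : ∀ x, q x = Real.exp ((∑ t ∈ Finset.Icc 1 T, θ t * c t x) - φ))
    (hq' : ∀ x, q' x = Real.exp ((∑ t ∈ Finset.Icc 1 T', θ t * c' t x) - φ')) :
    (∀ x, q x ∈ Set.Icc (Real.exp (-(ε / 2))) (Real.exp (ε / 2))) ∧
    (∀ x, q x ≤ Real.exp ε * q' x) :=
  mbde_output_in_mollifier_general ε hε Q0 T T' c c' hc hc' hcb hcb' θ hθ φ φ' hφ hφ' q q' hq hq'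
end

section
/- Let Q be a probability measure on X, let c : X → ℝ be measurable with c(x) ∈ [-log 2, log 2] for all x, let γ ∈ (0,1], and suppose (1/log 2) · ∫ (-c) dQ ≥ γ. Then ∫ exp(c(x)) dQ(x) ≤ exp(-Γ(γ)), where Γ(z) = log(4/(5 - 3z)). -/
/-!
On `[-log 2, log 2]` the convex function `exp` lies below its chord, which is the affine map
`x ↦ 5/4 + 3/(4 log 2) · x`. Integrating this against `Q` turns the weak learning guarantee
`∫ c dQ ≤ -γ log 2` into `∫ exp c dQ ≤ 5/4 - 3γ/4 = exp (-Γ(γ))`.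
-/

open MeasureTheory Real Set

lemma ConvexOn.le_chord {s : Set ℝ} {f : ℝ → ℝ} (hf : ConvexOn ℝ s f) {a b x : ℝ}
    (ha : a ∈ s) (hb : b ∈ s) (hab : a < b) (hx : x ∈ Icc a b) :
    f x ≤ ((b - x) * f a + (x - a) * f b) / (b - a) := by
  have hba : 0 < b - a := sub_pos.2 hab
  have hcomb : (b - x) / (b - a) * a + (x - a) / (b - a) * b = x := by field_simp; ring
  have key := hf.2 ha hb (div_nonneg (sub_nonneg.2 hx.2) hba.le)
    (div_nonneg (sub_nonneg.2 hx.1) hba.le) (by field_simp; ring)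
  simp only [smul_eq_mul, hcomb] at key
  calc f x ≤ (b - x) / (b - a) * f a + (x - a) / (b - a) * f b := key
    _ = ((b - x) * f a + (x - a) * f b) / (b - a) := by ring

lemma Real.exp_le_chord_log_two {x : ℝ} (hx : x ∈ Icc (-log 2) (log 2)) :
    exp x ≤ 5 / 4 + 3 / (4 * log 2) * x := by
  have hL : 0 < log 2 := log_pos one_lt_two
  have h_exp_neg : exp (-log 2) = 1 / 2 := by rw [exp_neg, exp_log two_pos, one_div]
  calc exp x ≤ ((log 2 - x) * exp (-log 2) + (x - -log 2) * exp (log 2)) / (log 2 - -log 2) :=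
        convexOn_exp.le_chord (mem_univ _) (mem_univ _) (by linarith) hx
    _ = 5 / 4 + 3 / (4 * log 2) * x := by
        rw [h_exp_neg, exp_log two_pos]
        field_simp
        ring

lemma MeasureTheory.integral_le_of_le_affine {X : Type*} [MeasurableSpace X] {Q : Measure X}
    [IsProbabilityMeasure Q] {f g : X → ℝ} (hf : Integrable f Q) (hg : Integrable g Q)
    {α β : ℝ} (h : ∀ x, f x ≤ α + β * g x) :
    ∫ x, f x ∂Q ≤ α + β * ∫ x, g x ∂Q := by
  calc ∫ x, f x ∂Q ≤ ∫ x, (α + β * g x) ∂Q :=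
        integral_mono hf ((integrable_const α).add (hg.const_mul β)) h
    _ = α + β * ∫ x, g x ∂Q := by
        rw [integral_add (integrable_const α) (hg.const_mul β), integral_const_mul]
        simp

/-- High-boosting-regime moment bound: if the classifier `c` is valued in
`[-log 2, log 2]` and satisfies the weak learning guarantee
`(1/log 2) ∫ (-c) dQ ≥ γ`, then `∫ exp(c) dQ ≤ exp(-Γ(γ))` where
`Γ(z) = log (4 / (5 - 3 z))`. -/
theorem chord_wla_bound
    {X : Type*} [MeasurableSpace X] (Q : Measure X) [IsProbabilityMeasure Q]
    (c : X → ℝ) (hcm : Measurable c)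
    (hcb : ∀ x, c x ∈ Set.Icc (-Real.log 2) (Real.log 2))
    (γ : ℝ) (hγ : γ ∈ Set.Ioc (0 : ℝ) 1)
    (hwla : γ ≤ (1 / Real.log 2) * ∫ x, -c x ∂Q) :
    ∫ x, Real.exp (c x) ∂Q ≤ Real.exp (-Real.log (4 / (5 - 3 * γ))) := by
  have hL : 0 < log 2 := log_pos one_lt_two
  have hc_int : Integrable c Q :=
    .of_bound hcm.aestronglyMeasurable (log 2) (.of_forall fun x => abs_le.2 (hcb x))
  have hexp_int : Integrable (fun x => exp (c x)) Q :=
    .of_bound (measurable_exp.comp hcm).aestronglyMeasurable (exp (log 2)) (.of_forall fun x => by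
      rw [norm_of_nonneg (exp_pos _).le]
      exact exp_le_exp.2 (hcb x).2)
  have hmean : 3 / (4 * log 2) * ∫ x, c x ∂Q ≤ -(3 * γ) / 4 := by
    rw [integral_neg, one_div_mul_eq_div, le_div_iff₀ hL] at hwla
    calc 3 / (4 * log 2) * ∫ x, c x ∂Q ≤ 3 / (4 * log 2) * (-γ * log 2) := by gcongr; linarith
      _ = -(3 * γ) / 4 := by field_simp
  have hrhs : exp (-log (4 / (5 - 3 * γ))) = (5 - 3 * γ) / 4 := by
    have : 0 < 5 - 3 * γ := by linarith [hγ.2]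
    rw [exp_neg, exp_log (by positivity), inv_div]
  calc ∫ x, exp (c x) ∂Q ≤ 5 / 4 + 3 / (4 * log 2) * ∫ x, c x ∂Q :=
        integral_le_of_le_affine hexp_int hc_int fun x => exp_le_chord_log_two (hcb x)
    _ ≤ exp (-log (4 / (5 - 3 * γ))) := by rw [hrhs]; linarith
end

section
/- (KL drop, high boosting regime.) Let p and q be probability densities with respect to a σ-finite measure μ with q > 0 and KL(p,q) finite. Let c : X → ℝ be measurable with c(x) ∈ [-log 2, log 2] for all x, let c* denote the essential supremum of |c| (assumed positive), and suppose the weak learning guarantees (1/c*)·∫ c·p dμ ≥ γ_P and (1/log 2)·∫ (-c)·q dμ ≥ γ_Q hold with γ_P ∈ (0,1] and γ_Q ∈ [1/3, 1]. Let θ ∈ (0,1), φ(θ) = log ∫ exp(θ·c)·q dμ, and q_θ = exp(θ·c - φ(θ))·q. Then KL(p, q_θ) ≤ KL(p,q) - θ·(c*·γ_P + Γ(γ_Q)), where Γ(z) = log(4/(5 - 3z)). -/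
/-! The boosted density is an exponential tilt of `q`, so
`KL(p, q_θ) = KL(p, q) - θ ∫ c p + φ(θ)`, and the weak learning guarantee for `p` bounds `θ ∫ c p`
below by `θ c* γ_P`. For `φ(θ)`, convexity of `exp` on `[-log 2, log 2]` bounds the moment
generating function by `cosh (θ log 2) - γ_Q sinh (θ log 2)`, and concavity of `u ↦ u ^ θ` at the
points `u = 2, 1/2` bounds this by `((5 - 3 γ_Q) / 4) ^ θ = exp (-θ Γ(γ_Q))`. -/

open MeasureTheory

/-- Kullback–Leibler divergence between two densities w.r.t. `μ`. -/
noncomputable def KLd {X : Type*} [MeasurableSpace X] (μ : Measure X)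
    (p q : X → ℝ) : ℝ :=
  ∫ x, p x * Real.log (p x / q x) ∂μ

open Real Set

theorem Real.cosh_mul_sub_mul_sinh_mul_le_rpow {a t γ : ℝ} (ht0 : 0 ≤ t) (ht1 : t ≤ 1)
    (hγ : γ ∈ Icc (-1) 1) : cosh (t * a) - γ * sinh (t * a) ≤ (cosh a - γ * sinh a) ^ t := by
  have h := (concaveOn_rpow ht0 ht1).2 (mem_Ici.2 (exp_pos a).le) (mem_Ici.2 (exp_pos (-a)).le)
    (by linarith [hγ.2] : 0 ≤ (1 - γ) / 2) (by linarith [hγ.1] : 0 ≤ (1 + γ) / 2) (by ring)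
  simp only [smul_eq_mul] at h
  calc cosh (t * a) - γ * sinh (t * a)
      = (1 - γ) / 2 * exp a ^ t + (1 + γ) / 2 * exp (-a) ^ t := by
        rw [cosh_eq, sinh_eq, ← exp_mul, ← exp_mul]; ring_nf
    _ ≤ _ := h
    _ = _ := by rw [cosh_eq, sinh_eq]; ring_nf

theorem Real.cosh_log_two_sub_mul_sinh_log_two (γ : ℝ) :
    cosh (log 2) - γ * sinh (log 2) = (5 - 3 * γ) / 4 := by
  rw [cosh_log two_pos, sinh_log two_pos]; ring

section
variable {X : Type*} [MeasurableSpace X] {μ : Measure X}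

theorem MeasureTheory.Integrable.mul_of_mem_Icc {f g : X → ℝ} {a : ℝ} (hg : Integrable g μ)
    (hf : Measurable f) (hfa : ∀ x, f x ∈ Icc (-a) a) : Integrable (fun x => f x * g x) μ :=
  hg.bdd_mul hf.aestronglyMeasurable (ae_of_all _ fun x => abs_le.2 (hfa x))

theorem MeasureTheory.Integrable.exp_mul_mul_of_mem_Icc {f g : X → ℝ} {a : ℝ} (t : ℝ)
    (hg : Integrable g μ) (hf : Measurable f) (hfa : ∀ x, f x ∈ Icc (-a) a) :
    Integrable (fun x => exp (t * f x) * g x) μ := by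
  refine hg.bdd_mul (by fun_prop) (ae_of_all _ fun x => ?_) (c := exp (|t| * a))
  rw [norm_of_nonneg (exp_pos _).le, exp_le_exp]
  calc t * f x ≤ |t| * |f x| := by rw [← abs_mul]; exact le_abs_self _
    _ ≤ |t| * a := by gcongr; exact abs_le.2 (hfa x)

theorem integral_exp_mul_mul_le_cosh_add_sinh {c q : X → ℝ} {a : ℝ} (t : ℝ) (ha : 0 < a)
    (hcm : Measurable c) (hca : ∀ x, c x ∈ Icc (-a) a) (hq0 : ∀ x, 0 ≤ q x)
    (hq : Integrable q μ) (hq1 : ∫ x, q x ∂μ = 1) :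
    ∫ x, exp (t * c x) * q x ∂μ ≤ cosh (t * a) + (∫ x, c x * q x ∂μ) / a * sinh (t * a) := by
  have hpt : ∀ x, exp (t * c x) ≤ cosh (t * a) + c x / a * sinh (t * a) := fun x => by
    have h := exp_mul_le_cosh_add_mul_sinh (t := c x / a)
      (by rw [abs_div, abs_of_pos ha, div_le_one ha]; exact abs_le.2 (hca x)) (t * a)
    rwa [show c x / a * (t * a) = t * c x by field_simp] at h
  have hrhs : (fun x => (cosh (t * a) + c x / a * sinh (t * a)) * q x)
      = fun x => cosh (t * a) * q x + sinh (t * a) / a * (c x * q x) := by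
    ext x; ring
  have hcq := hq.mul_of_mem_Icc hcm hca
  calc ∫ x, exp (t * c x) * q x ∂μ
      ≤ ∫ x, (cosh (t * a) + c x / a * sinh (t * a)) * q x ∂μ := by
        refine integral_mono (hq.exp_mul_mul_of_mem_Icc t hcm hca) ?_
          fun x => mul_le_mul_of_nonneg_right (hpt x) (hq0 x)
        rw [hrhs]; exact (hq.const_mul _).add (hcq.const_mul _)
    _ = cosh (t * a) + (∫ x, c x * q x ∂μ) / a * sinh (t * a) := by
        rw [hrhs, integral_add (hq.const_mul _) (hcq.const_mul _), integral_const_mul,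
          integral_const_mul, hq1]
        ring

theorem KLd_exp_mul (p : X → ℝ) {q f : X → ℝ} (hq : ∀ x, q x ≠ 0)
    (hKL : Integrable (fun x => p x * log (p x / q x)) μ)
    (hpf : Integrable (fun x => p x * f x) μ) :
    KLd μ p (fun x => exp (f x) * q x) = KLd μ p q - ∫ x, p x * f x ∂μ := by
  have hpt : ∀ x, p x * log (p x / (exp (f x) * q x)) = p x * log (p x / q x) - p x * f x := by
    intro x
    rcases eq_or_ne (p x) 0 with hp | hp
    · simp [hp]
    · rw [div_mul_eq_div_div_swap, log_div (div_ne_zero hp (hq x)) (exp_ne_zero _), log_exp]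
      ring
  simp only [KLd, hpt, integral_sub hKL hpf]

theorem integral_exp_mul_mul_pos {c q : X → ℝ} {a : ℝ} (t : ℝ) (hcm : Measurable c)
    (hca : ∀ x, c x ∈ Icc (-a) a) (hq0 : ∀ x, 0 < q x) (hq : Integrable q μ)
    (hq1 : ∫ x, q x ∂μ = 1) : 0 < ∫ x, exp (t * c x) * q x ∂μ := by
  rw [integral_pos_iff_support_of_nonneg (fun x => (mul_pos (exp_pos _) (hq0 x)).le)
    (hq.exp_mul_mul_of_mem_Icc t hcm hca),
    Function.support_eq_univ fun x => (mul_pos (exp_pos _) (hq0 x)).ne']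
  exact Measure.measure_univ_pos.2 fun hμ => by simp [hμ] at hq1

theorem integral_exp_mul_mul_le_rpow {c q : X → ℝ} {γ θ : ℝ} (hθ0 : 0 ≤ θ) (hθ1 : θ ≤ 1)
    (hcm : Measurable c) (hcb : ∀ x, c x ∈ Icc (-log 2) (log 2)) (hq0 : ∀ x, 0 ≤ q x)
    (hq : Integrable q μ) (hq1 : ∫ x, q x ∂μ = 1) (hγ : γ ∈ Icc (-1) 1)
    (hcq : (∫ x, c x * q x ∂μ) / log 2 ≤ -γ) :
    ∫ x, exp (θ * c x) * q x ∂μ ≤ ((5 - 3 * γ) / 4) ^ θ := calc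
  _ ≤ cosh (θ * log 2) + (∫ x, c x * q x ∂μ) / log 2 * sinh (θ * log 2) :=
    integral_exp_mul_mul_le_cosh_add_sinh θ (log_pos one_lt_two) hcm hcb hq0 hq hq1
  _ ≤ cosh (θ * log 2) - γ * sinh (θ * log 2) := by
    have := sinh_nonneg_iff.2 (mul_nonneg hθ0 (log_pos one_lt_two).le)
    nlinarith
  _ ≤ ((5 - 3 * γ) / 4) ^ θ := by
    rw [← cosh_log_two_sub_mul_sinh_log_two]
    exact cosh_mul_sub_mul_sinh_mul_le_rpow hθ0 hθ1 hγ

end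

theorem kl_drop_high_boosting_general
    {X : Type*} [MeasurableSpace X] (μ : Measure X)
    (p q : X → ℝ) (hq0 : ∀ x, 0 < q x)
    (hpint : Integrable p μ) (hqint : Integrable q μ)
    (hp1 : ∫ x, p x ∂μ = 1) (hq1 : ∫ x, q x ∂μ = 1)
    (hKLfin : Integrable (fun x => p x * Real.log (p x / q x)) μ)
    (c : X → ℝ) (hcm : Measurable c)
    (hcb : ∀ x, c x ∈ Set.Icc (-Real.log 2) (Real.log 2))
    (cstar : ℝ) (hcpos : 0 < cstar)
    (γP γQ : ℝ) (hγQ : γQ ∈ Set.Icc (1/3 : ℝ) 1)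
    (hwlaP : γP ≤ (1 / cstar) * ∫ x, c x * p x ∂μ)
    (hwlaQ : γQ ≤ (1 / Real.log 2) * ∫ x, (-c x) * q x ∂μ)
    (θ : ℝ) (hθ : θ ∈ Set.Ioo (0 : ℝ) 1)
    (φ : ℝ) (hφ : φ = Real.log (∫ x, Real.exp (θ * c x) * q x ∂μ))
    (qθ : X → ℝ) (hqθ : ∀ x, qθ x = Real.exp (θ * c x - φ) * q x) :
    KLd μ p qθ ≤ KLd μ p q - θ * (cstar * γP + Real.log (4 / (5 - 3 * γQ))) := by
  obtain ⟨hθ0, hθ1⟩ := hθ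
  have hcp := hpint.mul_of_mem_Icc hcm hcb
  have hP : cstar * γP ≤ ∫ x, c x * p x ∂μ := by
    rwa [one_div_mul_eq_div, le_div_iff₀' hcpos] at hwlaP
  have hQ : (∫ x, c x * q x ∂μ) / log 2 ≤ -γQ := by
    simp only [neg_mul, integral_neg, one_div_mul_eq_div, neg_div] at hwlaQ
    linarith
  have hφ_le : φ ≤ -θ * log (4 / (5 - 3 * γQ)) := by
    rw [hφ, ← inv_div, log_inv, neg_mul_neg,
      ← log_rpow (by linarith [hγQ.2] : (0 : ℝ) < (5 - 3 * γQ) / 4)]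
    exact log_le_log (integral_exp_mul_mul_pos θ hcm hcb hq0 hqint hq1)
      (integral_exp_mul_mul_le_rpow hθ0.le hθ1.le hcm hcb (fun x => (hq0 x).le) hqint hq1
        ⟨by linarith [hγQ.1], hγQ.2⟩ hQ)
  have hpf : (fun x => p x * (θ * c x - φ)) = fun x => θ * (c x * p x) - φ * p x := by
    ext x; ring
  have hKL : KLd μ p qθ = KLd μ p q - (θ * ∫ x, c x * p x ∂μ - φ) := by
    rw [show qθ = fun x => exp (θ * c x - φ) * q x from funext hqθ,
      KLd_exp_mul p (fun x => (hq0 x).ne') hKLfin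
        (hpf ▸ (hcp.const_mul θ).sub (hpint.const_mul φ)),
      hpf, integral_sub (hcp.const_mul θ) (hpint.const_mul φ), integral_const_mul,
      integral_const_mul, hp1, mul_one]
  rw [hKL]
  nlinarith

/-- KL drop in the high boosting regime: under the weak learning guarantees
with `γ_Q ∈ [1/3, 1]`, one boosting step with step size `θ ∈ (0,1)` decreases
the KL divergence by at least `θ (c* γ_P + Γ(γ_Q))`, with
`Γ(z) = log (4 / (5 - 3 z))`. -/
theorem kl_drop_high_boosting
    {X : Type*} [MeasurableSpace X] (μ : Measure X) [SigmaFinite μ]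
    (p q : X → ℝ) (hpm : Measurable p) (hqm : Measurable q)
    (hp0 : ∀ x, 0 ≤ p x) (hq0 : ∀ x, 0 < q x)
    (hpint : Integrable p μ) (hqint : Integrable q μ)
    (hp1 : ∫ x, p x ∂μ = 1) (hq1 : ∫ x, q x ∂μ = 1)
    (hKLfin : Integrable (fun x => p x * Real.log (p x / q x)) μ)
    (c : X → ℝ) (hcm : Measurable c)
    (hcb : ∀ x, c x ∈ Set.Icc (-Real.log 2) (Real.log 2))
    (cstar : ℝ) (hcstar : cstar = essSup (fun x => |c x|) μ) (hcpos : 0 < cstar)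
    (γP γQ : ℝ) (hγP : γP ∈ Set.Ioc (0 : ℝ) 1) (hγQ : γQ ∈ Set.Icc (1/3 : ℝ) 1)
    (hwlaP : γP ≤ (1 / cstar) * ∫ x, c x * p x ∂μ)
    (hwlaQ : γQ ≤ (1 / Real.log 2) * ∫ x, (-c x) * q x ∂μ)
    (θ : ℝ) (hθ : θ ∈ Set.Ioo (0 : ℝ) 1)
    (φ : ℝ) (hφ : φ = Real.log (∫ x, Real.exp (θ * c x) * q x ∂μ))
    (qθ : X → ℝ) (hqθ : ∀ x, qθ x = Real.exp (θ * c x - φ) * q x) :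
    KLd μ p qθ ≤ KLd μ p q - θ * (cstar * γP + Real.log (4 / (5 - 3 * γQ))) :=
  kl_drop_high_boosting_general μ p q hq0 hpint hqint hp1 hq1 hKLfin c hcm hcb cstar hcpos γP γQ hγQ
    hwlaP hwlaQ θ hθ φ hφ qθ hqθ
end

section
/- Let ε > 0, let p and q_0 be probability densities with respect to a σ-finite measure μ with p, q_0 > 0, and let q(x) = exp(g(x))·q_0(x) be a probability density with g(x) ∈ [-ε/2, ε/2] for all x. Assume KL(p,q_0) and KL(p,q) are finite and set Δ = KL(p,q_0) - KL(p,q). Then for any measurable B ⊆ X, m(B,q) ≥ m(B,p) - KL(p,q_0;B) + (ε/2)·(m(B,p) + 2Δ/ε - 1), where m(B,r) = ∫_B r dμ and KL(p,q_0;B) = ∫_B p·log(p/q_0) dμ. -/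
/-!
Since `log x ≤ x - 1`, pointwise `q ≥ p - p log (p / q) = p - p log (p / q₀) + p g`, so
integrating over `B` gives `m(B,q) ≥ m(B,p) - KL(p,q₀;B) + ∫_B p g`. Moreover
`Δ = ∫ p g`, and `g ≤ ε/2` bounds the part of this integral outside `B` by
`(ε/2)(1 - m(B,p))`.
-/

open MeasureTheory

open Real

lemma Real.sub_mul_log_div_le {p q : ℝ} (hp : 0 ≤ p) (hq : 0 < q) :
    p - p * log (p / q) ≤ q := by
  rcases hp.eq_or_lt with rfl | hp
  · simpa using hq.le
  calc p - p * log (p / q) = p + p * log (q / p) := by rw [← inv_div, log_inv]; ring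
    _ ≤ p + p * (q / p - 1) := by gcongr; exact log_le_sub_one_of_pos (div_pos hq hp)
    _ = q := by field_simp; ring

lemma Real.mul_log_div_sub_mul_log_div_exp_mul (p g : ℝ) {r : ℝ} (hr : r ≠ 0) :
    p * log (p / r) - p * log (p / (exp g * r)) = p * g := by
  rcases eq_or_ne p 0 with rfl | hp
  · simp
  rw [log_div hp hr, log_div hp (mul_ne_zero (exp_ne_zero g) hr), log_mul (exp_ne_zero g) hr,
    log_exp]
  ring

lemma MeasureTheory.integral_sub_setIntegral_compl_le_setIntegral {X : Type*}
    [MeasurableSpace X] {μ : Measure X} {f h : X → ℝ} {B : Set X} (hB : MeasurableSet B)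
    (hf : Integrable f μ) (hh : IntegrableOn h Bᶜ μ) (hfh : ∀ x ∈ Bᶜ, f x ≤ h x) :
    ∫ x, f x ∂μ - ∫ x in Bᶜ, h x ∂μ ≤ ∫ x in B, f x ∂μ := by
  rw [← integral_add_compl hB hf]
  linarith [setIntegral_mono_on hf.integrableOn hh hB.compl hfh]

theorem mass_capture_bound_mollified_general
    {X : Type*} [MeasurableSpace X] (μ : Measure X)
    (ε : ℝ) (hε : 0 < ε)
    (p q0 q : X → ℝ)
    (hp0 : ∀ x, 0 < p x) (hq00 : ∀ x, 0 < q0 x)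
    (hpint : Integrable p μ)
    (hqint : Integrable q μ)
    (hp1 : ∫ x, p x ∂μ = 1)
    (g : X → ℝ)
    (hgb : ∀ x, g x ∈ Set.Icc (-(ε / 2)) (ε / 2))
    (hq : ∀ x, q x = Real.exp (g x) * q0 x)
    (hKL0fin : Integrable (fun x => p x * Real.log (p x / q0 x)) μ)
    (hKLfin : Integrable (fun x => p x * Real.log (p x / q x)) μ)
    (Δ : ℝ) (hΔ : Δ = KLd μ p q0 - KLd μ p q) :
    ∀ B : Set X, MeasurableSet B →
      ∫ x in B, q x ∂μ ≥
        (∫ x in B, p x ∂μ) - (∫ x in B, p x * Real.log (p x / q0 x) ∂μ) +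
          ε / 2 * ((∫ x in B, p x ∂μ) + 2 * Δ / ε - 1) := by
  intro B hB
  have hpg_eq (x : X) : p x * log (p x / q0 x) - p x * log (p x / q x) = p x * g x := by
    rw [hq x]
    exact mul_log_div_sub_mul_log_div_exp_mul _ _ (hq00 x).ne'
  have hpg_int : Integrable (fun x => p x * g x) μ :=
    (hKL0fin.sub hKLfin).congr (ae_of_all _ hpg_eq)
  have hΔ_eq : Δ = ∫ x, p x * g x ∂μ := by
    rw [hΔ, KLd, KLd, ← integral_sub hKL0fin hKLfin]
    exact integral_congr_ae (ae_of_all _ hpg_eq)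
  have hq_ge (x : X) : p x - p x * log (p x / q0 x) + p x * g x ≤ q x := by
    have hq_pos : 0 < q x := hq x ▸ mul_pos (exp_pos _) (hq00 x)
    linarith [sub_mul_log_div_le (hp0 x).le hq_pos, hpg_eq x]
  have hq_B : (∫ x in B, p x ∂μ) - (∫ x in B, p x * log (p x / q0 x) ∂μ)
      + ∫ x in B, p x * g x ∂μ ≤ ∫ x in B, q x ∂μ := by
    have hsub : IntegrableOn (fun x => p x - p x * log (p x / q0 x)) B μ :=
      (hpint.sub hKL0fin).integrableOn
    rw [← integral_sub hpint.integrableOn hKL0fin.integrableOn,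
      ← integral_add hsub hpg_int.integrableOn]
    exact setIntegral_mono_on (hsub.add hpg_int.integrableOn) hqint.integrableOn hB
      fun x _ => hq_ge x
  have hpg_B : Δ - ε / 2 * (1 - ∫ x in B, p x ∂μ) ≤ ∫ x in B, p x * g x ∂μ := by
    have hp_Bc : ∫ x in Bᶜ, p x ∂μ = 1 - ∫ x in B, p x ∂μ := by
      rw [← hp1, ← integral_add_compl hB hpint]
      ring
    have h := integral_sub_setIntegral_compl_le_setIntegral hB hpg_int
      (hpint.const_mul (ε / 2)).integrableOn
      fun x _ => (mul_le_mul_of_nonneg_left (hgb x).2 (hp0 x).le).trans_eq (mul_comm _ _)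
    rwa [integral_const_mul, hp_Bc, ← hΔ_eq] at h
  have hrhs : ε / 2 * ((∫ x in B, p x ∂μ) + 2 * Δ / ε - 1)
      = Δ - ε / 2 * (1 - ∫ x in B, p x ∂μ) := by
    field_simp
    ring
  rw [ge_iff_le, hrhs]
  linarith

/-- Mass-capture bound for a mollified exponential-family member
`q = exp(g) q₀` with `|g| ≤ ε/2`: for any measurable `B`,
`m(B,q) ≥ m(B,p) - KL(p,q₀;B) + (ε/2)(m(B,p) + 2Δ/ε - 1)` where
`Δ = KL(p,q₀) - KL(p,q)`. -/
theorem mass_capture_bound_mollified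
    {X : Type*} [MeasurableSpace X] (μ : Measure X) [SigmaFinite μ]
    (ε : ℝ) (hε : 0 < ε)
    (p q0 q : X → ℝ) (hpm : Measurable p) (hq0m : Measurable q0)
    (hp0 : ∀ x, 0 < p x) (hq00 : ∀ x, 0 < q0 x)
    (hpint : Integrable p μ) (hq0int : Integrable q0 μ)
    (hqint : Integrable q μ)
    (hp1 : ∫ x, p x ∂μ = 1) (hq01 : ∫ x, q0 x ∂μ = 1)
    (g : X → ℝ) (hgm : Measurable g)
    (hgb : ∀ x, g x ∈ Set.Icc (-(ε / 2)) (ε / 2))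
    (hq : ∀ x, q x = Real.exp (g x) * q0 x)
    (hq1 : ∫ x, q x ∂μ = 1)
    (hKL0fin : Integrable (fun x => p x * Real.log (p x / q0 x)) μ)
    (hKLfin : Integrable (fun x => p x * Real.log (p x / q x)) μ)
    (Δ : ℝ) (hΔ : Δ = KLd μ p q0 - KLd μ p q) :
    ∀ B : Set X, MeasurableSet B →
      ∫ x in B, q x ∂μ ≥
        (∫ x in B, p x ∂μ) - (∫ x in B, p x * Real.log (p x / q0 x) ∂μ) +
          ε / 2 * ((∫ x in B, p x ∂μ) + 2 * Δ / ε - 1) :=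
  mass_capture_bound_mollified_general μ ε hε p q0 q hp0 hq00 hpint hqint hp1 g hgb hq hKL0fin
    hKLfin Δ hΔ
end

section
/- (Mode capture.) Let ε > 0, T ≥ 1, γ_P, γ_Q ∈ (0,1], and set θ_T(ε) = (ε/(ε + 4·log 2))^T and h(x) = ε + 2x. Let p and q_0 be probability densities with respect to a σ-finite measure μ with p, q_0 > 0, and let q_T(x) = exp(g(x))·q_0(x) be a probability density with g(x) ∈ [-ε/2, ε/2] for all x. Assume KL(p,q_0) and KL(p,q_T) are finite and that the high-boosting-regime guarantee KL(p,q_0) - KL(p,q_T) ≥ (ε/2)·((γ_P + γ_Q)/2)·(1 - θ_T(ε)) holds. Then for every α ∈ [0,1] and every measurable B ⊆ X with m(B,p) ≥ ε·h((2 - γ_P - γ_Q)·T)/(h(α)·h(T)), one has m(B,q_T) ≥ (1 - α)·m(B,p) - KL(p,q_0;B). -/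
/-!
Since `q_T = exp(g) q₀`, the gain `G = KL(p,q₀) - KL(p,q_T)` equals `∫ p g`. As `g ≤ ε/2`, the
part of `G` collected outside `B` is at most `(ε/2)(1 - m(B,p))`, so the boosting guarantee forces
`∫_B p g ≥ -α m(B,p)` as soon as `m(B,p)` exceeds the stated threshold. On the other hand the
pointwise inequality `a - b ≤ a log(a/b)` gives
`m(B,p) - m(B,q_T) ≤ KL(p,q_T;B) = KL(p,q₀;B) - ∫_B p g`.
-/

open MeasureTheory

lemma sub_le_mul_log_div {a b : ℝ} (ha : 0 < a) (hb : 0 < b) :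
    a - b ≤ a * Real.log (a / b) := by
  have h := Real.one_sub_inv_le_log_of_pos (div_pos ha hb)
  rw [inv_div] at h
  calc a - b = a * (1 - b / a) := by field_simp
    _ ≤ a * Real.log (a / b) := mul_le_mul_of_nonneg_left h ha.le

lemma mul_log_div_exp_mul {a b : ℝ} (ha : a ≠ 0) (hb : b ≠ 0) (t : ℝ) :
    a * Real.log (a / (Real.exp t * b)) = a * Real.log (a / b) - a * t := by
  rw [Real.log_div ha (mul_ne_zero (Real.exp_ne_zero t) hb),
    Real.log_mul (Real.exp_ne_zero t) hb, Real.log_exp, Real.log_div ha hb]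
  ring

lemma div_add_pow_mul_add_mul_le {ε c : ℝ} (hε : 0 < ε) (hc : 0 ≤ c) (n : ℕ) :
    (ε / (ε + c)) ^ n * (ε + c * n) ≤ ε := by
  have hbernoulli : 1 + n * (c / ε) ≤ (1 + c / ε) ^ n :=
    one_add_mul_le_pow (by linarith [div_nonneg hc hε.le]) n
  have hratio : ε / (ε + c) * (1 + c / ε) = 1 := by field_simp
  calc (ε / (ε + c)) ^ n * (ε + c * n) = ε * ((ε / (ε + c)) ^ n * (1 + n * (c / ε))) := by
        field_simp
    _ ≤ ε * ((ε / (ε + c)) ^ n * (1 + c / ε) ^ n) := by gcongr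
    _ = ε := by rw [← mul_pow, hratio, one_pow, mul_one]

lemma two_le_four_mul_log_two : (2 : ℝ) ≤ 4 * Real.log 2 := by
  linarith [Real.log_two_gt_d9]

/-- The threshold arithmetic of mode capture, with `s = γ_P + γ_Q`, `c = 4 log 2` and
`h(x) = ε + 2x` written out; the left side bounds what the gain may lose outside `B`. -/
lemma mul_le_mul_of_threshold_le {ε c s α m : ℝ} {T : ℕ} (hε : 0 < ε) (hc : 2 ≤ c)
    (hs0 : 0 ≤ s) (hs2 : s ≤ 2) (hα : 0 ≤ α)
    (hm : ε * (ε + 2 * ((2 - s) * T)) / ((ε + 2 * α) * (ε + 2 * T)) ≤ m) :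
    ε / 2 * (1 - s / 2 * (1 - (ε / (ε + c)) ^ T)) ≤ (ε / 2 + α) * m := by
  set θ := (ε / (ε + c)) ^ T
  have hT : (0 : ℝ) ≤ T := T.cast_nonneg
  have hθ : θ * (ε + 2 * T) ≤ ε :=
    calc θ * (ε + 2 * T) ≤ θ * (ε + c * T) := by gcongr
      _ ≤ ε := div_add_pow_mul_add_mul_le hε (by linarith) T
  rw [div_le_iff₀ (by positivity)] at hm
  have hmT : ε * (1 - s / 2 * (1 - θ)) * (ε + 2 * T) ≤ (ε + 2 * α) * m * (ε + 2 * T) := by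
    nlinarith [mul_le_mul_of_nonneg_left hθ (by positivity : 0 ≤ ε * s),
      mul_nonneg (mul_nonneg hε.le (sub_nonneg.2 hs2)) hT]
  have := le_of_mul_le_mul_right hmT (by positivity)
  linarith

section

variable {X : Type*} [MeasurableSpace X] {μ : Measure X} {B : Set X}

lemma setIntegral_sub_le_setIntegral_mul_log_div {p q : X → ℝ} (hB : MeasurableSet B)
    (hp : ∀ x ∈ B, 0 < p x) (hq : ∀ x ∈ B, 0 < q x)
    (hpi : IntegrableOn p B μ) (hqi : IntegrableOn q B μ)
    (hKL : IntegrableOn (fun x => p x * Real.log (p x / q x)) B μ) :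
    ∫ x in B, p x ∂μ - ∫ x in B, q x ∂μ ≤ ∫ x in B, p x * Real.log (p x / q x) ∂μ := by
  rw [← integral_sub hpi hqi]
  exact setIntegral_mono_on (hpi.sub hqi) hKL hB fun x hx => sub_le_mul_log_div (hp x hx) (hq x hx)

lemma integral_mul_sub_le_setIntegral_mul {p g : X → ℝ} {M : ℝ} (hB : MeasurableSet B)
    (hp : ∀ x ∈ Bᶜ, 0 ≤ p x) (hg : ∀ x ∈ Bᶜ, g x ≤ M)
    (hpi : Integrable p μ) (hp1 : ∫ x, p x ∂μ = 1) (hpg : Integrable (fun x => p x * g x) μ) :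
    ∫ x, p x * g x ∂μ - M * (1 - ∫ x in B, p x ∂μ) ≤ ∫ x in B, p x * g x ∂μ := by
  have hcompl : ∫ x in Bᶜ, p x ∂μ = 1 - ∫ x in B, p x ∂μ := by
    rw [← hp1, ← integral_add_compl hB hpi]
    ring
  have hout : ∫ x in Bᶜ, p x * g x ∂μ ≤ M * (1 - ∫ x in B, p x ∂μ) := by
    rw [← hcompl, ← integral_const_mul]
    refine setIntegral_mono_on hpg.integrableOn (hpi.integrableOn.const_mul M) hB.compl
      fun x hx => ?_
    rw [mul_comm M]
    exact mul_le_mul_of_nonneg_left (hg x hx) (hp x hx)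
  linarith [integral_add_compl hB hpg]

end

theorem mode_capture_general
    {X : Type*} [MeasurableSpace X] (μ : Measure X)
    (ε : ℝ) (hε : 0 < ε) (T : ℕ)
    (γP γQ : ℝ) (hγP : γP ∈ Set.Ioc (0 : ℝ) 1) (hγQ : γQ ∈ Set.Ioc (0 : ℝ) 1)
    (h : ℝ → ℝ) (hh : ∀ x, h x = ε + 2 * x)
    (p q0 qT : X → ℝ)
    (hp0 : ∀ x, 0 < p x) (hq00 : ∀ x, 0 < q0 x)
    (hpint : Integrable p μ)
    (hqTint : Integrable qT μ)
    (hp1 : ∫ x, p x ∂μ = 1)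
    (g : X → ℝ)
    (hgb : ∀ x, g x ∈ Set.Icc (-(ε / 2)) (ε / 2))
    (hqT : ∀ x, qT x = Real.exp (g x) * q0 x)
    (hKL0fin : Integrable (fun x => p x * Real.log (p x / q0 x)) μ)
    (hKLTfin : Integrable (fun x => p x * Real.log (p x / qT x)) μ)
    (hhigh : KLd μ p q0 - KLd μ p qT ≥
      ε / 2 * ((γP + γQ) / 2 * (1 - (ε / (ε + 4 * Real.log 2)) ^ T))) :
    ∀ α ∈ Set.Icc (0 : ℝ) 1, ∀ B : Set X, MeasurableSet B →
      (∫ x in B, p x ∂μ) ≥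
        ε * h ((2 - γP - γQ) * (T : ℝ)) / (h α * h (T : ℝ)) →
      ∫ x in B, qT x ∂μ ≥
        (1 - α) * (∫ x in B, p x ∂μ) -
          ∫ x in B, p x * Real.log (p x / q0 x) ∂μ := by
  intro α hα B hB hmass
  have hqT0 : ∀ x, 0 < qT x := fun x => hqT x ▸ mul_pos (Real.exp_pos _) (hq00 x)
  have hlog : (fun x => p x * Real.log (p x / qT x)) =
      fun x => p x * Real.log (p x / q0 x) - p x * g x :=
    funext fun x => hqT x ▸ mul_log_div_exp_mul (hp0 x).ne' (hq00 x).ne' (g x)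
  have hpg : Integrable (fun x => p x * g x) μ :=
    (hKL0fin.sub (hlog ▸ hKLTfin)).congr (ae_of_all _ fun x => sub_sub_cancel _ _)
  have hgain : KLd μ p q0 - KLd μ p qT = ∫ x, p x * g x ∂μ := by
    rw [KLd, KLd, hlog, integral_sub hKL0fin hpg]
    ring
  have hdeficit := setIntegral_sub_le_setIntegral_mul_log_div hB (fun x _ => hp0 x)
    (fun x _ => hqT0 x) hpint.integrableOn hqTint.integrableOn hKLTfin.integrableOn
  rw [hlog, integral_sub hKL0fin.integrableOn hpg.integrableOn] at hdeficit
  have hinside := integral_mul_sub_le_setIntegral_mul hB (fun x _ => (hp0 x).le)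
    (fun x _ => (hgb x).2) hpint hp1 hpg
  simp only [hh] at hmass
  have hthreshold := mul_le_mul_of_threshold_le (s := γP + γQ) (m := ∫ x in B, p x ∂μ) (T := T)
    hε two_le_four_mul_log_two (by linarith [hγP.1, hγQ.1]) (by linarith [hγP.2, hγQ.2]) hα.1
    (by rwa [← sub_sub])
  linarith

/-- Mode capture: under the high-boosting-regime KL guarantee, for every
`α ∈ [0,1]` and every measurable region `B` of mass at least
`ε h((2 - γ_P - γ_Q) T) / (h(α) h(T))` under `p` (with `h(x) = ε + 2x`), the
MBDE output `q_T = exp(g) q₀` captures mass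
`m(B,q_T) ≥ (1 - α) m(B,p) - KL(p,q₀;B)`. -/
theorem mode_capture
    {X : Type*} [MeasurableSpace X] (μ : Measure X) [SigmaFinite μ]
    (ε : ℝ) (hε : 0 < ε) (T : ℕ) (hT : 1 ≤ T)
    (γP γQ : ℝ) (hγP : γP ∈ Set.Ioc (0 : ℝ) 1) (hγQ : γQ ∈ Set.Ioc (0 : ℝ) 1)
    (h : ℝ → ℝ) (hh : ∀ x, h x = ε + 2 * x)
    (p q0 qT : X → ℝ) (hpm : Measurable p) (hq0m : Measurable q0)
    (hp0 : ∀ x, 0 < p x) (hq00 : ∀ x, 0 < q0 x)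
    (hpint : Integrable p μ) (hq0int : Integrable q0 μ)
    (hqTint : Integrable qT μ)
    (hp1 : ∫ x, p x ∂μ = 1) (hq01 : ∫ x, q0 x ∂μ = 1)
    (g : X → ℝ) (hgm : Measurable g)
    (hgb : ∀ x, g x ∈ Set.Icc (-(ε / 2)) (ε / 2))
    (hqT : ∀ x, qT x = Real.exp (g x) * q0 x)
    (hqT1 : ∫ x, qT x ∂μ = 1)
    (hKL0fin : Integrable (fun x => p x * Real.log (p x / q0 x)) μ)
    (hKLTfin : Integrable (fun x => p x * Real.log (p x / qT x)) μ)
    (hhigh : KLd μ p q0 - KLd μ p qT ≥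
      ε / 2 * ((γP + γQ) / 2 * (1 - (ε / (ε + 4 * Real.log 2)) ^ T))) :
    ∀ α ∈ Set.Icc (0 : ℝ) 1, ∀ B : Set X, MeasurableSet B →
      (∫ x in B, p x ∂μ) ≥
        ε * h ((2 - γP - γQ) * (T : ℝ)) / (h α * h (T : ℝ)) →
      ∫ x in B, qT x ∂μ ≥
        (1 - α) * (∫ x in B, p x ∂μ) -
          ∫ x in B, p x * Real.log (p x / q0 x) ∂μ :=
  mode_capture_general μ ε hε T γP γQ hγP hγQ h hh p q0 qT hp0 hq00 hpint hqTint hp1 g hgb hqT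
    hKL0fin hKLTfin hhigh
end
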